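/- Let d be a Dyck path on an n×n board of the form (d_1, d_2, n−1, …, n−1, n, …, n) (i.e., d_i ∈ {n−1, n} for all i ≥ 3) with bounce number 3, and let P = P(d). Then every P-tableau has at most one row of length 3; every P-tableau that has a row of length 3 has at most one row of length exactly 2; and every P-tableau with no row of length 3 has at most three rows of length 2. In particular, the shape of any P-tableau is one of 1^n, 2^1 1^{n-2}, 2^2 1^{n-4}, 2^3 1^{n-6}, 3^1 1^{n-3}, or 3^1 2^1 1^{n-5}. -/

import Mathlib

open scoped Classical

/-- A Dyck path on an `n × n` board: a weakly increasing sequence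
`d 1 ≤ d 2 ≤ ⋯ ≤ d (n-1) ≤ n` with `i ≤ d i`; we record it on indices `1, …, n`
with the harmless boundary convention `d n = n`. -/
structure DyckPath (n : ℕ) where
  d : ℕ → ℕ
  mono : ∀ i j : ℕ, 1 ≤ i → i ≤ j → j ≤ n → d i ≤ d j
  le_n : ∀ i : ℕ, 1 ≤ i → i ≤ n → d i ≤ n
  ge_self : ∀ i : ℕ, 1 ≤ i → i ≤ n → i ≤ d i
  top : d n = n

/-- The shape `3^l 2^j 1^m`, as a list of row lengths. -/
def shape (l j m : ℕ) : List ℕ :=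
  List.replicate l 3 ++ List.replicate j 2 ++ List.replicate m 1

/-- Position in the row-by-row reading word where row `i` (0-indexed) starts. -/
def rowStart (μ : List ℕ) (i : ℕ) : ℕ := (μ.take i).sum

/-- The entry in row `i`, column `j` (both 0-indexed) of the tableau of shape `μ`
whose row-by-row reading word is `L`. -/
def entry (μ L : List ℕ) (i j : ℕ) : ℕ := L.getD (rowStart μ i + j) 0

/-- The cells (row, column), 0-indexed, of the Young diagram with row lengths `μ`. -/
def cellsOf (μ : List ℕ) : Finset (ℕ × ℕ) :=
  (Finset.range μ.length ×ˢ Finset.range (μ.foldr max 0)).filter fun c =>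
    c.2 < μ.getD c.1 0

namespace DyckPath

variable {n : ℕ}

/-- The natural unit interval order `P(d)`: `i ≺ j ↔ i < n ∧ j > d i`. -/
def prec (D : DyckPath n) (i j : ℕ) : Prop := i < n ∧ D.d i < j

/-- Incomparability in `P(d)`. -/
def Incomp (D : DyckPath n) (x y : ℕ) : Prop := ¬ D.prec x y ∧ ¬ D.prec y x

/-- The bounce sequence `m 0 = d 1`, `m (k+1) = d (m k + 1)`. -/
def bounce (D : DyckPath n) : ℕ → ℕ
  | 0 => D.d 1
  | k + 1 => D.d (D.bounce k + 1)

def m0 (D : DyckPath n) : ℕ := D.bounce 0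

def m1 (D : DyckPath n) : ℕ := D.bounce 1

/-- `d` has bounce number three: `m 2 = n` is the first bounce term equal to `n`. -/
def BounceThree (D : DyckPath n) : Prop := D.m0 < n ∧ D.m1 < n ∧ D.bounce 2 = n

/-- `L` is the row-by-row reading word of a `P`-tableau of shape `μ`:
`L` uses each of `1, …, n` exactly once, rows strictly increase in `≺`, and for
vertically adjacent cells the lower entry is not `≺` the upper one. -/
def IsPTab (D : DyckPath n) (μ L : List ℕ) : Prop :=
  L.Perm (List.map (· + 1) (List.range n)) ∧ μ.sum = n ∧
  (∀ i j : ℕ, i < μ.length → j + 1 < μ.getD i 0 →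
    D.prec (entry μ L i j) (entry μ L i (j + 1))) ∧
  (∀ i j : ℕ, i + 1 < μ.length → j < μ.getD (i + 1) 0 →
    ¬ D.prec (entry μ L (i + 1) j) (entry μ L i j))

/-- The number of inversions of a `P`-tableau: pairs of entries `x > y`,
incomparable in `P`, with `x` in a strictly higher row than `y`. -/
noncomputable def invNum (D : DyckPath n) (μ L : List ℕ) : ℕ :=
  ((cellsOf μ ×ˢ cellsOf μ).filter fun pq =>
    pq.1.1 < pq.2.1 ∧ entry μ L pq.2.1 pq.2.2 < entry μ L pq.1.1 pq.1.2 ∧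
      D.Incomp (entry μ L pq.1.1 pq.1.2) (entry μ L pq.2.1 pq.2.2)).card

/-- The finite set of (reading words of) `P`-tableaux of shape `μ`. -/
noncomputable def ptabs (D : DyckPath n) (μ : List ℕ) : Finset (List ℕ) :=
  ((List.map (· + 1) (List.range n)).permutations.toFinset).filter fun L => D.IsPTab μ L

/-- `B_μ(q) = Σ_T q^{inv T}` over all `P`-tableaux `T` of shape `μ`, as a polynomial in `ℤ[q]`. -/
noncomputable def B (D : DyckPath n) (μ : List ℕ) : Polynomial ℤ :=
  ∑ L ∈ D.ptabs μ, Polynomial.X ^ D.invNum μ L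

end DyckPath

section AuxLemmas

lemma aux_sum_take_le (l : List ℕ) (k : ℕ) : (l.take k).sum ≤ l.sum := by
  calc (l.take k).sum ≤ (l.take k).sum + (l.drop k).sum := Nat.le_add_right _ _
  _ = l.sum := by rw [← List.sum_append, List.take_append_drop]

lemma aux_rowStart_succ (μ : List ℕ) (i : ℕ) (h : i < μ.length) :
    rowStart μ (i + 1) = rowStart μ i + μ.getD i 0 := by
  unfold rowStart
  rw [List.sum_take_succ _ i h, List.getD_eq_getElem _ _ h]

lemma aux_rowStart_mono (μ : List ℕ) {a b : ℕ} (h : a ≤ b) :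
    rowStart μ a ≤ rowStart μ b := by
  unfold rowStart
  calc (μ.take a).sum = ((μ.take b).take a).sum := by rw [List.take_take, min_eq_left h]
  _ ≤ (μ.take b).sum := aux_sum_take_le _ _

lemma aux_pos_lt (μ : List ℕ) {i jj : ℕ} (hi : i < μ.length) (hj : jj < μ.getD i 0) :
    rowStart μ i + jj < μ.sum := by
  have h1 : rowStart μ (i + 1) = rowStart μ i + μ.getD i 0 := aux_rowStart_succ μ i hi
  have h2 : rowStart μ (i + 1) ≤ μ.sum := aux_sum_take_le μ (i + 1)
  omega

lemma aux_pos_inj (μ : List ℕ) {i jj i' jj' : ℕ} (hi : i < μ.length) (hj : jj < μ.getD i 0)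
    (hi' : i' < μ.length) (hj' : jj' < μ.getD i' 0)
    (he : rowStart μ i + jj = rowStart μ i' + jj') : i = i' ∧ jj = jj' := by
  have key : ∀ a b ja jb : ℕ, a < μ.length → ja < μ.getD a 0 → a < b →
      rowStart μ a + ja < rowStart μ b + jb := by
    intro a b ja jb ha hja hab
    have h1 := aux_rowStart_succ μ a ha
    have h2 := aux_rowStart_mono μ (show a + 1 ≤ b by omega)
    omega
  rcases lt_trichotomy i i' with h | h | h
  · exact absurd he (by have := key i i' jj jj' hi hj h; omega)
  · subst h; omega
  · have := key i' i jj' jj hi' hj' h; omega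

lemma aux_entry_bounds {n : ℕ} {μ L : List ℕ}
    (hperm : L.Perm (List.map (· + 1) (List.range n))) (hsum : μ.sum = n)
    {i jj : ℕ} (hi : i < μ.length) (hj : jj < μ.getD i 0) :
    1 ≤ entry μ L i jj ∧ entry μ L i jj ≤ n := by
  have hlen : L.length = n := by simpa using hperm.length_eq
  have hp : rowStart μ i + jj < L.length := by
    rw [hlen, ← hsum]; exact aux_pos_lt μ hi hj
  have hmem : entry μ L i jj ∈ L := by
    unfold entry; rw [List.getD_eq_getElem _ _ hp]; exact List.getElem_mem hp
  have hmem' := hperm.mem_iff.mp hmem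
  simp only [List.mem_map, List.mem_range] at hmem'
  omega

lemma aux_entry_ne {n : ℕ} {μ L : List ℕ}
    (hperm : L.Perm (List.map (· + 1) (List.range n))) (hsum : μ.sum = n)
    {i jj i' jj' : ℕ} (hi : i < μ.length) (hj : jj < μ.getD i 0)
    (hi' : i' < μ.length) (hj' : jj' < μ.getD i' 0)
    (hne : ¬ (i = i' ∧ jj = jj')) : entry μ L i jj ≠ entry μ L i' jj' := by
  have hlen : L.length = n := by simpa using hperm.length_eq
  have hnd : L.Nodup :=
    hperm.nodup_iff.mpr ((List.nodup_range).map fun a b h => by omega)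
  have hp : rowStart μ i + jj < L.length := by
    rw [hlen, ← hsum]; exact aux_pos_lt μ hi hj
  have hp' : rowStart μ i' + jj' < L.length := by
    rw [hlen, ← hsum]; exact aux_pos_lt μ hi' hj'
  intro he
  unfold entry at he
  rw [List.getD_eq_getElem _ _ hp, List.getD_eq_getElem _ _ hp'] at he
  have hpos := (List.Nodup.getElem_inj_iff hnd).mp he
  exact hne (aux_pos_inj μ hi hj hi' hj' hpos)

lemma aux_shape_length (l j m : ℕ) : (shape l j m).length = l + j + m := by
  simp [shape]; omega

lemma aux_shape_sum (l j m : ℕ) : (shape l j m).sum = 3 * l + 2 * j + m := by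
  simp [shape]; ring

lemma aux_mem_shape_3 {l j m : ℕ} : 3 ∈ shape l j m ↔ 0 < l := by
  simp [shape, List.mem_replicate]

lemma aux_shape_count3 (l j m : ℕ) : (shape l j m).count 3 = l := by
  simp [shape, List.count_append, List.count_replicate]

lemma aux_shape_count2 (l j m : ℕ) : (shape l j m).count 2 = j := by
  simp [shape, List.count_append, List.count_replicate]

lemma aux_shape_getD_3 {l j m i : ℕ} (h : i < l) : (shape l j m).getD i 0 = 3 := by
  unfold shape
  rw [List.getD_append _ _ _ _ (by simp; omega),
    List.getD_append _ _ _ _ (by simpa using h),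
    List.getD_eq_getElem _ _ (by simpa using h)]
  simp

lemma aux_shape_getD_2 {l j m i : ℕ} (h1 : l ≤ i) (h2 : i < l + j) :
    (shape l j m).getD i 0 = 2 := by
  unfold shape
  rw [List.getD_append _ _ _ _ (by simp; omega),
    List.getD_append_right _ _ _ _ (by simpa using h1)]
  have h3 : i - (List.replicate l 3).length < (List.replicate j 2).length := by
    simp; omega
  rw [List.getD_eq_getElem _ _ h3]
  simp

lemma aux_sorted_decomp : ∀ μ : List ℕ, μ.Pairwise (· ≥ ·) → (∀ x ∈ μ, 1 ≤ x ∧ x ≤ 3) →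
    ∃ l j m, μ = shape l j m := by
  intro μ
  induction μ with
  | nil => exact fun _ _ => ⟨0, 0, 0, rfl⟩
  | cons x μ ih =>
    intro hs hb
    obtain ⟨hge, hs'⟩ := List.pairwise_cons.mp hs
    obtain ⟨l, j, m, rfl⟩ := ih hs' (fun y hy => hb y (List.mem_cons_of_mem _ hy))
    have hx := hb x List.mem_cons_self
    have h3mem : 0 < l → (3 : ℕ) ≤ x := fun hl =>
      hge 3 (aux_mem_shape_3.mpr hl)
    have h2mem : 0 < j → (2 : ℕ) ≤ x := fun hj => by
      refine hge 2 ?_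
      simp [shape, List.mem_replicate]
      omega
    rcases (show x = 1 ∨ x = 2 ∨ x = 3 by omega) with rfl | rfl | rfl
    · have hl : l = 0 := by by_contra h; have := h3mem (by omega); omega
      have hj : j = 0 := by by_contra h; have := h2mem (by omega); omega
      subst hl; subst hj
      exact ⟨0, 0, m + 1, by simp [shape, List.replicate_succ]⟩
    · have hl : l = 0 := by by_contra h; have := h3mem (by omega); omega
      subst hl
      exact ⟨0, j + 1, m, by simp [shape, List.replicate_succ]⟩
    · exact ⟨l + 1, j, m, by simp [shape, List.replicate_succ]⟩

end AuxLemmas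

set_option maxHeartbeats 1600000 in
/-- **Lemma 4.2(c).** For a Dyck path `d = (d₁, d₂, n-1, …, n-1, n, …, n)`
of bounce number three: every `P`-tableau has at most one row of length `3`; one with a row of
length `3` has at most one row of length `2`; one with no row of length `3` has at most three
rows of length `2`; and the shape of any `P`-tableau is one of
`1^n, 2 1^{n-2}, 2^2 1^{n-4}, 2^3 1^{n-6}, 3 1^{n-3}, 3 2 1^{n-5}`. -/
theorem ptab_shapes_limited
    (n : ℕ) (D : DyckPath n)
    (hform : ∀ i : ℕ, 3 ≤ i → i < n → D.d i = n - 1 ∨ D.d i = n)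
    (h3 : D.BounceThree) :
    ∀ μ L : List ℕ, μ.Pairwise (· ≥ ·) → (∀ x ∈ μ, 0 < x) → D.IsPTab μ L →
      μ.count 3 ≤ 1 ∧
      (3 ∈ μ → μ.count 2 ≤ 1) ∧
      (3 ∉ μ → μ.count 2 ≤ 3) ∧
      (μ = shape 0 0 n ∨ μ = shape 0 1 (n - 2) ∨ μ = shape 0 2 (n - 4) ∨
        μ = shape 0 3 (n - 6) ∨ μ = shape 1 0 (n - 3) ∨ μ = shape 1 1 (n - 5)) := by
  intro μ L hsort hpos hPT
  obtain ⟨hperm, hsum, hrow, _⟩ := hPT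
  obtain ⟨h0, h1, h2⟩ := h3
  -- Bounce data
  set M0 := D.d 1 with hM0def
  set M1 := D.d (M0 + 1) with hM1def
  have h0' : M0 < n := h0
  have h1' : M1 < n := h1
  have hdn : D.d (M1 + 1) = n := h2
  have hn1 : 1 ≤ n := by omega
  have hM0pos : 1 ≤ M0 := D.ge_self 1 le_rfl hn1
  have hM1ge : M0 + 1 ≤ M1 := D.ge_self (M0 + 1) (by omega) (by omega)
  -- Basic order facts
  have step0 : ∀ x y : ℕ, D.prec x y → 1 ≤ x → y ≤ n →
      M0 + 1 ≤ y ∧ x < y ∧ x < n := by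
    rintro x y ⟨hxn, hdy⟩ hx hyn
    have h1 := D.mono 1 x le_rfl hx (le_of_lt hxn)
    have h2 := D.ge_self x hx (le_of_lt hxn)
    omega
  have step1 : ∀ x y : ℕ, D.prec x y → M0 + 1 ≤ x → M1 + 1 ≤ y := by
    rintro x y ⟨hxn, hdy⟩ hx
    have := D.mono (M0 + 1) x (by omega) hx (le_of_lt hxn)
    omega
  have step2 : ∀ x y : ℕ, D.prec x y → M1 + 1 ≤ x → n + 1 ≤ y := by
    rintro x y ⟨hxn, hdy⟩ hx
    have := D.mono (M1 + 1) x (by omega) hx (le_of_lt hxn)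
    omega
  have big : ∀ x y : ℕ, D.prec x y → 3 ≤ x → y ≤ n → y = n := by
    rintro x y ⟨hxn, hdy⟩ hx hyn
    rcases hform x hx hxn with h | h <;> omega
  have hd2 : M0 = 1 → D.d 2 = M1 := fun h => by
    rw [hM1def, h]
  -- structure of three-element chains
  have chain3 : ∀ a b c : ℕ, D.prec a b → D.prec b c → 1 ≤ a → b ≤ n → c ≤ n →
      a ≤ 2 ∧ (c = n ∨ (a = 1 ∧ b = 2 ∧ M0 = 1)) := by
    intro a b c hab hbc ha hbn hcn
    have hb := step0 a b hab ha hbn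
    have hbn' : b < n := hbc.1
    have ha2 : a ≤ 2 := by
      by_contra h
      have := big a b hab (by omega) hbn
      omega
    refine ⟨ha2, ?_⟩
    by_cases hb3 : 3 ≤ b
    · exact Or.inl (big b c hbc hb3 hcn)
    · exact Or.inr ⟨by omega, by omega, by omega⟩
  have chain3_a2 : ∀ b c : ℕ, D.prec 2 b → D.prec b c → b ≤ n → c ≤ n →
      2 ≤ M0 ∧ c = n := by
    intro b c hab hbc hbn hcn
    have hM0ne : M0 ≠ 1 := by
      intro h
      have hd2' := hd2 h
      have hbM1 : M1 + 1 ≤ b := by have := hab.2; omega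
      have := step2 b c hbc hbM1
      omega
    have hb := step0 2 b hab (by omega) hbn
    exact ⟨by omega, big b c hbc (by omega) hcn⟩
  have no2x3 : ∀ a b c a' b' c' : ℕ, D.prec a b → D.prec b c → D.prec a' b' →
      D.prec b' c' → 1 ≤ a → 1 ≤ a' → b ≤ n → b' ≤ n → c ≤ n → c' ≤ n →
      a ≠ a' → c ≠ c' → False := by
    intro a b c a' b' c' hab hbc hab' hbc' ha ha' hbn hbn' hcn hcn' hnea hnec
    obtain ⟨ha2, hcc⟩ := chain3 a b c hab hbc ha hbn hcn
    obtain ⟨ha2', hcc'⟩ := chain3 a' b' c' hab' hbc' ha' hbn' hcn'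
    have hb0 := step0 a b hab ha hbn
    have hb0' := step0 a' b' hab' ha' hbn'
    rcases (show a = 2 ∨ a' = 2 by omega) with h | h
    · subst h
      obtain ⟨hM0, hc⟩ := chain3_a2 b c hab hbc hbn hcn
      rcases hcc' with h' | h' <;> omega
    · subst h
      obtain ⟨hM0, hc⟩ := chain3_a2 b' c' hab' hbc' hbn' hcn'
      rcases hcc with h' | h' <;> omega
  have chain2 : ∀ x y : ℕ, D.prec x y → 1 ≤ x → y ≤ n → x ≤ 2 ∨ y = n := by
    intro x y h hx hy
    by_cases h3x : 3 ≤ x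
    · exact Or.inr (big x y h h3x hy)
    · exact Or.inl (by omega)
  -- every part is at most 3
  have hub : ∀ x ∈ μ, x ≤ 3 := by
    intro x hx
    by_contra hcon
    obtain ⟨i, hxe⟩ := List.mem_iff_get.mp hx
    have hi : i.1 < μ.length := i.2
    have hgd : μ.getD i.1 0 = x := by
      rw [List.getD_eq_getElem _ _ hi, ← List.get_eq_getElem, hxe]
    have c01 : D.prec (entry μ L i.1 0) (entry μ L i.1 1) := hrow i.1 0 hi (by omega)
    have c12 : D.prec (entry μ L i.1 1) (entry μ L i.1 2) := hrow i.1 1 hi (by omega)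
    have c23 : D.prec (entry μ L i.1 2) (entry μ L i.1 3) := hrow i.1 2 hi (by omega)
    have he0 := aux_entry_bounds hperm hsum hi (show 0 < μ.getD i.1 0 by omega)
    have he1 := aux_entry_bounds hperm hsum hi (show 1 < μ.getD i.1 0 by omega)
    have he2 := aux_entry_bounds hperm hsum hi (show 2 < μ.getD i.1 0 by omega)
    have he3 := aux_entry_bounds hperm hsum hi (show 3 < μ.getD i.1 0 by omega)
    have s0 := step0 _ _ c01 he0.1 he1.2
    have s1 := step1 _ _ c12 (by omega)
    have s2 := step2 _ _ c23 (by omega)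
    omega
  obtain ⟨l, j, m, rfl⟩ :=
    aux_sorted_decomp μ hsort (fun x hx => ⟨hpos x hx, hub x hx⟩)
  have hlen : (shape l j m).length = l + j + m := aux_shape_length l j m
  have hsum' : 3 * l + 2 * j + m = n := by rw [← hsum, aux_shape_sum]
  -- at most one row of length 3
  have hl1 : l ≤ 1 := by
    by_contra hcon
    have hl2 : 2 ≤ l := by omega
    have hi0 : 0 < (shape l j m).length := by omega
    have hi1 : 1 < (shape l j m).length := by omega
    have g0 : (shape l j m).getD 0 0 = 3 := aux_shape_getD_3 (by omega)
    have g1 : (shape l j m).getD 1 0 = 3 := aux_shape_getD_3 (by omega)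
    have hab : D.prec (entry (shape l j m) L 0 0) (entry (shape l j m) L 0 1) :=
      hrow 0 0 hi0 (by omega)
    have hbc : D.prec (entry (shape l j m) L 0 1) (entry (shape l j m) L 0 2) :=
      hrow 0 1 hi0 (by omega)
    have hab' : D.prec (entry (shape l j m) L 1 0) (entry (shape l j m) L 1 1) :=
      hrow 1 0 hi1 (by omega)
    have hbc' : D.prec (entry (shape l j m) L 1 1) (entry (shape l j m) L 1 2) :=
      hrow 1 1 hi1 (by omega)
    have e00 := aux_entry_bounds hperm hsum hi0 (show 0 < (shape l j m).getD 0 0 by omega)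
    have e01 := aux_entry_bounds hperm hsum hi0 (show 1 < (shape l j m).getD 0 0 by omega)
    have e02 := aux_entry_bounds hperm hsum hi0 (show 2 < (shape l j m).getD 0 0 by omega)
    have e10 := aux_entry_bounds hperm hsum hi1 (show 0 < (shape l j m).getD 1 0 by omega)
    have e11 := aux_entry_bounds hperm hsum hi1 (show 1 < (shape l j m).getD 1 0 by omega)
    have e12 := aux_entry_bounds hperm hsum hi1 (show 2 < (shape l j m).getD 1 0 by omega)
    have dne_a := aux_entry_ne hperm hsum hi0 (show 0 < (shape l j m).getD 0 0 by omega)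
      hi1 (show 0 < (shape l j m).getD 1 0 by omega) (by omega)
    have dne_c := aux_entry_ne hperm hsum hi0 (show 2 < (shape l j m).getD 0 0 by omega)
      hi1 (show 2 < (shape l j m).getD 1 0 by omega) (by omega)
    exact no2x3 _ _ _ _ _ _ hab hbc hab' hbc' e00.1 e10.1 e01.2 e11.2 e02.2 e12.2
      dne_a dne_c
  -- at most three rows of length 2
  have hj3 : j ≤ 3 := by
    by_contra hcon
    have hj4 : 4 ≤ j := by omega
    have hiv : ∀ k : ℕ, k < 4 → l + k < (shape l j m).length := by intro k hk; omega
    have hgv : ∀ k : ℕ, k < 4 → (shape l j m).getD (l + k) 0 = 2 := fun k hk =>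
      aux_shape_getD_2 (by omega) (by omega)
    have hc0 : D.prec (entry (shape l j m) L (l + 0) 0) (entry (shape l j m) L (l + 0) 1) :=
      hrow (l + 0) 0 (hiv 0 (by omega)) (by rw [hgv 0 (by omega)]; omega)
    have hc1 : D.prec (entry (shape l j m) L (l + 1) 0) (entry (shape l j m) L (l + 1) 1) :=
      hrow (l + 1) 0 (hiv 1 (by omega)) (by rw [hgv 1 (by omega)]; omega)
    have hc2 : D.prec (entry (shape l j m) L (l + 2) 0) (entry (shape l j m) L (l + 2) 1) :=
      hrow (l + 2) 0 (hiv 2 (by omega)) (by rw [hgv 2 (by omega)]; omega)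
    have hc3 : D.prec (entry (shape l j m) L (l + 3) 0) (entry (shape l j m) L (l + 3) 1) :=
      hrow (l + 3) 0 (hiv 3 (by omega)) (by rw [hgv 3 (by omega)]; omega)
    have hx : ∀ k : ℕ, (hk : k < 4) → 0 < (shape l j m).getD (l + k) 0 := by
      intro k hk; rw [hgv k hk]; omega
    have hy : ∀ k : ℕ, (hk : k < 4) → 1 < (shape l j m).getD (l + k) 0 := by
      intro k hk; rw [hgv k hk]; omega
    have bx0 := aux_entry_bounds hperm hsum (hiv 0 (by omega)) (hx 0 (by omega))
    have bx1 := aux_entry_bounds hperm hsum (hiv 1 (by omega)) (hx 1 (by omega))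
    have bx2 := aux_entry_bounds hperm hsum (hiv 2 (by omega)) (hx 2 (by omega))
    have bx3 := aux_entry_bounds hperm hsum (hiv 3 (by omega)) (hx 3 (by omega))
    have by0 := aux_entry_bounds hperm hsum (hiv 0 (by omega)) (hy 0 (by omega))
    have by1 := aux_entry_bounds hperm hsum (hiv 1 (by omega)) (hy 1 (by omega))
    have by2 := aux_entry_bounds hperm hsum (hiv 2 (by omega)) (hy 2 (by omega))
    have by3 := aux_entry_bounds hperm hsum (hiv 3 (by omega)) (hy 3 (by omega))
    have d0 := chain2 _ _ hc0 bx0.1 by0.2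
    have d1 := chain2 _ _ hc1 bx1.1 by1.2
    have d2 := chain2 _ _ hc2 bx2.1 by2.2
    have d3 := chain2 _ _ hc3 bx3.1 by3.2
    have nex : ∀ k k' : ℕ, (hk : k < 4) → (hk' : k' < 4) → k ≠ k' →
        entry (shape l j m) L (l + k) 0 ≠ entry (shape l j m) L (l + k') 0 := by
      intro k k' hk hk' hne
      exact aux_entry_ne hperm hsum (hiv k hk) (hx k hk) (hiv k' hk') (hx k' hk')
        (by omega)
    have ney : ∀ k k' : ℕ, (hk : k < 4) → (hk' : k' < 4) → k ≠ k' →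
        entry (shape l j m) L (l + k) 1 ≠ entry (shape l j m) L (l + k') 1 := by
      intro k k' hk hk' hne
      exact aux_entry_ne hperm hsum (hiv k hk) (hy k hk) (hiv k' hk') (hy k' hk')
        (by omega)
    have n01 := nex 0 1 (by omega) (by omega) (by omega)
    have n02 := nex 0 2 (by omega) (by omega) (by omega)
    have n03 := nex 0 3 (by omega) (by omega) (by omega)
    have n12 := nex 1 2 (by omega) (by omega) (by omega)
    have n13 := nex 1 3 (by omega) (by omega) (by omega)
    have n23 := nex 2 3 (by omega) (by omega) (by omega)
    have m01 := ney 0 1 (by omega) (by omega) (by omega)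
    have m02 := ney 0 2 (by omega) (by omega) (by omega)
    have m03 := ney 0 3 (by omega) (by omega) (by omega)
    have m12 := ney 1 2 (by omega) (by omega) (by omega)
    have m13 := ney 1 3 (by omega) (by omega) (by omega)
    have m23 := ney 2 3 (by omega) (by omega) (by omega)
    rcases d0 with d0 | d0 <;> rcases d1 with d1 | d1 <;> rcases d2 with d2 | d2 <;>
      rcases d3 with d3 | d3 <;> omega
  -- a row of length 3 forces at most one row of length 2
  have hl1j : 1 ≤ l → j ≤ 1 := by
    intro hl
    by_contra hcon
    have hj2 : 2 ≤ j := by omega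
    have hi0 : 0 < (shape l j m).length := by omega
    have hiA : l < (shape l j m).length := by omega
    have hiB : l + 1 < (shape l j m).length := by omega
    have g0 : (shape l j m).getD 0 0 = 3 := aux_shape_getD_3 (by omega)
    have gA : (shape l j m).getD l 0 = 2 := aux_shape_getD_2 (by omega) (by omega)
    have gB : (shape l j m).getD (l + 1) 0 = 2 := aux_shape_getD_2 (by omega) (by omega)
    have hab : D.prec (entry (shape l j m) L 0 0) (entry (shape l j m) L 0 1) :=
      hrow 0 0 hi0 (by omega)
    have hbc : D.prec (entry (shape l j m) L 0 1) (entry (shape l j m) L 0 2) :=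
      hrow 0 1 hi0 (by omega)
    have hxy : D.prec (entry (shape l j m) L l 0) (entry (shape l j m) L l 1) :=
      hrow l 0 hiA (by omega)
    have hxy' : D.prec (entry (shape l j m) L (l + 1) 0) (entry (shape l j m) L (l + 1) 1) :=
      hrow (l + 1) 0 hiB (by omega)
    have j00 : 0 < (shape l j m).getD 0 0 := by omega
    have j01 : 1 < (shape l j m).getD 0 0 := by omega
    have j02 : 2 < (shape l j m).getD 0 0 := by omega
    have jA0 : 0 < (shape l j m).getD l 0 := by omega
    have jA1 : 1 < (shape l j m).getD l 0 := by omega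
    have jB0 : 0 < (shape l j m).getD (l + 1) 0 := by omega
    have jB1 : 1 < (shape l j m).getD (l + 1) 0 := by omega
    have ea := aux_entry_bounds hperm hsum hi0 j00
    have eb := aux_entry_bounds hperm hsum hi0 j01
    have ec := aux_entry_bounds hperm hsum hi0 j02
    have ex := aux_entry_bounds hperm hsum hiA jA0
    have ey := aux_entry_bounds hperm hsum hiA jA1
    have ex' := aux_entry_bounds hperm hsum hiB jB0
    have ey' := aux_entry_bounds hperm hsum hiB jB1
    obtain ⟨ha2, hcc⟩ := chain3 _ _ _ hab hbc ea.1 eb.2 ec.2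
    have dx := chain2 _ _ hxy ex.1 ey.2
    have dx' := chain2 _ _ hxy' ex'.1 ey'.2
    have nax := aux_entry_ne hperm hsum hi0 j00 hiA jA0 (by omega)
    have nax' := aux_entry_ne hperm hsum hi0 j00 hiB jB0 (by omega)
    have nbx := aux_entry_ne hperm hsum hi0 j01 hiA jA0 (by omega)
    have nbx' := aux_entry_ne hperm hsum hi0 j01 hiB jB0 (by omega)
    have nxx := aux_entry_ne hperm hsum hiA jA0 hiB jB0 (by omega)
    have ncy := aux_entry_ne hperm hsum hi0 j02 hiA jA1 (by omega)
    have ncy' := aux_entry_ne hperm hsum hi0 j02 hiB jB1 (by omega)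
    have nyy := aux_entry_ne hperm hsum hiA jA1 hiB jB1 (by omega)
    rcases hcc with hc | ⟨ha1, hb2, hM⟩
    · rcases dx with dx | dx <;> rcases dx' with dx' | dx' <;> omega
    · rcases dx with dx | dx <;> rcases dx' with dx' | dx' <;> omega
  refine ⟨?_, ?_, ?_, ?_⟩
  · rw [aux_shape_count3]; exact hl1
  · intro h3mem
    rw [aux_shape_count2]
    exact hl1j (aux_mem_shape_3.mp h3mem)
  · intro _
    rw [aux_shape_count2]; exact hj3
  · rcases (show l = 0 ∨ l = 1 by omega) with rfl | rfl
    · rcases (show j = 0 ∨ j = 1 ∨ j = 2 ∨ j = 3 by omega) with rfl | rfl | rfl | rfl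
      · exact Or.inl (by rw [show m = n by omega])
      · exact Or.inr (Or.inl (by rw [show m = n - 2 by omega]))
      · exact Or.inr (Or.inr (Or.inl (by rw [show m = n - 4 by omega])))
      · exact Or.inr (Or.inr (Or.inr (Or.inl (by rw [show m = n - 6 by omega]))))
    · have hj1 : j ≤ 1 := hl1j (by omega)
      rcases (show j = 0 ∨ j = 1 by omega) with rfl | rfl
      · exact Or.inr (Or.inr (Or.inr (Or.inr (Or.inl
          (by rw [show m = n - 3 by omega])))))
      · exact Or.inr (Or.inr (Or.inr (Or.inr (Or.inr
          (by rw [show m = n - 5 by omega])))))
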